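/- arXiv:2302.08279 — 2 statements merged into one kernel-verified Lean document; each statement's English description precedes it below -/
import Mathlib

section
/- Let E and F be subsets of [n] of the same cardinality with E ≤ F. Suppose e ∈ E and f ∈ F satisfy e ≤ f, and moreover either e is the largest element of E with e ≤ f, or f is the least element of F with e ≤ f. Then E \ {e} ≤ F \ {f}. -/
/-!
Let `e` be the `i`-th element of `E` and `f` the `j`-th element of `F` (counting from `0`).
The extremality hypothesis forces `j ≤ i`: if `i < j`, the `j`-th element of `E` lies strictly
above `e` but below `f`, or the `i`-th element of `F` lies strictly below `f` but above `e`.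
Deleting position `i` from `E` and position `j ≤ i` from `F` leaves the comparisons at positions
`k < j` and `k ≥ i` untouched, and for `j ≤ k < i` we have `E_k ≤ F_k ≤ F_{k+1}`.
-/

/-- Dominance order on equal-cardinality finite sets of naturals:
the i-th smallest element of `E` is at most the i-th smallest element of `F`. -/
def Dom (E F : Finset ℕ) : Prop :=
  List.Forall₂ (· ≤ ·) (Finset.sort E (· ≤ ·)) (Finset.sort F (· ≤ ·))

/-- The k-th smallest element of `E` (1-based), with junk value 0 out of range. -/
def nth (E : Finset ℕ) (k : ℕ) : ℕ := (Finset.sort E (· ≤ ·)).getD (k - 1) 0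

/-- The (0-based) level of `e` in `E`: its index in the increasing enumeration. -/
def level (e : ℕ) (E : Finset ℕ) : ℕ := List.idxOf e (Finset.sort E (· ≤ ·))

theorem Finset.sort_erase {α : Type*} [LinearOrder α] (s : Finset α) (a : α) :
    (s.erase a).sort (· ≤ ·) = (s.sort (· ≤ ·)).erase a := by
  refine List.Perm.eq_of_sortedLE (s.erase a).sortedLT_sort.sortedLE
    ((s.pairwise_sort _).sublist List.erase_sublist).sortedLE (Multiset.coe_eq_coe.1 ?_)
  rw [← Multiset.coe_erase, sort_eq, sort_eq, erase_val]

namespace List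

variable {α : Type*} [LinearOrder α] {l m : List α}

theorem Forall₂.eraseIdx_of_le (h : Forall₂ (· ≤ ·) l m) (hm : m.SortedLE) {i j : ℕ}
    (hi : i < l.length) (hji : j ≤ i) : Forall₂ (· ≤ ·) (l.eraseIdx i) (m.eraseIdx j) := by
  have hlen := h.length_eq
  have hlen_l := length_eraseIdx_of_lt hi
  have hlen_m := length_eraseIdx_of_lt (hlen ▸ hji.trans_lt hi)
  refine forall₂_iff_get.2 ⟨by omega, fun k hk₁ hk₂ => ?_⟩
  simp only [get_eq_getElem, getElem_eraseIdx]
  split_ifs with hki hkj hkj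
  · exact h.get (by omega) (by omega)
  · exact (h.get (by omega) (by omega)).trans (hm.getElem_le_getElem_of_le k.le_succ)
  · omega
  · exact h.get (by omega) (by omega)

theorem Forall₂.idxOf_le_idxOf_of_max_left (h : Forall₂ (· ≤ ·) l m) (hl : l.SortedLT)
    {a b : α} (ha : a ∈ l) (hb : b ∈ m) (hmax : ∀ x ∈ l, x ≤ b → x ≤ a) :
    m.idxOf b ≤ l.idxOf a := by
  by_contra! hlt
  have hj : m.idxOf b < l.length := h.length_eq ▸ idxOf_lt_length_of_mem hb
  have hle : l[m.idxOf b] ≤ b :=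
    (h.get hj (idxOf_lt_length_of_mem hb)).trans_eq (getElem_idxOf _)
  have hgt : a < l[m.idxOf b] :=
    getElem_idxOf (idxOf_lt_length_of_mem ha) ▸ hl.getElem_lt_getElem_of_lt hlt
  exact (hmax _ (getElem_mem _) hle).not_gt hgt

theorem Forall₂.idxOf_le_idxOf_of_min_right (h : Forall₂ (· ≤ ·) l m) (hm : m.SortedLT)
    {a b : α} (ha : a ∈ l) (hb : b ∈ m) (hmin : ∀ y ∈ m, a ≤ y → b ≤ y) :
    m.idxOf b ≤ l.idxOf a := by
  by_contra! hlt
  have hi : l.idxOf a < m.length := h.length_eq ▸ idxOf_lt_length_of_mem ha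
  have hge : a ≤ m[l.idxOf a] :=
    (getElem_idxOf (idxOf_lt_length_of_mem ha)).symm.trans_le (h.get _ hi)
  have hlt' : m[l.idxOf a] < b :=
    getElem_idxOf (idxOf_lt_length_of_mem hb) ▸ hm.getElem_lt_getElem_of_lt hlt
  exact (hmin _ (getElem_mem _) hge).not_gt hlt'

end List

theorem stmt3_general (E F : Finset ℕ) (h : Dom E F) (e f : ℕ) (he : e ∈ E) (hf : f ∈ F)
    (hmax : (∀ e' ∈ E, e' ≤ f → e' ≤ e) ∨ (∀ f' ∈ F, e ≤ f' → f ≤ f')) :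
    Dom (E.erase e) (F.erase f) := by
  have he' : e ∈ E.sort (· ≤ ·) := (Finset.mem_sort _).2 he
  have hf' : f ∈ F.sort (· ≤ ·) := (Finset.mem_sort _).2 hf
  have hidx : (F.sort (· ≤ ·)).idxOf f ≤ (E.sort (· ≤ ·)).idxOf e := by
    rcases hmax with hmaxE | hminF
    · exact h.idxOf_le_idxOf_of_max_left E.sortedLT_sort he' hf' (by simpa using hmaxE)
    · exact h.idxOf_le_idxOf_of_min_right F.sortedLT_sort he' hf' (by simpa using hminF)
  rw [Dom, Finset.sort_erase, Finset.sort_erase, List.erase_eq_eraseIdx_of_idxOf rfl,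
    List.erase_eq_eraseIdx_of_idxOf rfl]
  exact h.eraseIdx_of_le F.sortedLT_sort.sortedLE (List.idxOf_lt_length_of_mem he') hidx

theorem stmt3 (n : ℕ) (E F : Finset ℕ) (hEs : E ⊆ Finset.Icc 1 n) (hFs : F ⊆ Finset.Icc 1 n)
    (hc : E.card = F.card) (h : Dom E F) (e f : ℕ) (he : e ∈ E) (hf : f ∈ F) (hef : e ≤ f)
    (hmax : (∀ e' ∈ E, e' ≤ f → e' ≤ e) ∨ (∀ f' ∈ F, e ≤ f' → f ≤ f')) :
    Dom (E.erase e) (F.erase f) :=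
  stmt3_general E F h e f he hf hmax
end

section
/- In the setting of the maximal-lift subroutine (B ≤ A, γ ∉ A, A' = A ∪ {γ}, α' defined as the q-th smallest element of A' where q is least with b̃_q > ã'_q): suppose an element α is at the same level j in both A and B (i.e., ã_j = α = b̃_j), and γ < α. Then α' < α, and α is at level j+1 in both A' = A ∪ {γ} and B' = B ∪ {α'}. -/
open Finset

theorem List.Pairwise.countP_lt_getElem {α : Type*} [LinearOrder α] {l : List α}
    (hl : l.Pairwise (· < ·)) {i : ℕ} (hi : i < l.length) :
    l.countP (· < l[i]) = i := by
  induction l generalizing i with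
  | nil => simp at hi
  | cons a l ih =>
    obtain ⟨ha, hl⟩ := List.pairwise_cons.mp hl
    cases i with
    | zero =>
      simpa [List.countP_eq_zero] using fun x hx => (ha x hx).le
    | succ i =>
      have hi : i < l.length := Nat.lt_of_succ_lt_succ hi
      simp [ih hl hi, ha _ (l.getElem_mem hi)]

theorem Finset.countP_sort_lt {α : Type*} [LinearOrder α] (E : Finset α) (e : α) :
    (E.sort (· ≤ ·)).countP (· < e) = #{x ∈ E | x < e} := by
  rw [← Multiset.coe_countP, sort_eq, Multiset.countP_eq_card_filter]
  rfl

theorem nth_eq_getElem (E : Finset ℕ) {k : ℕ} (hk : k - 1 < (E.sort (· ≤ ·)).length) :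
    nth E k = (E.sort (· ≤ ·))[k - 1] :=
  List.getD_eq_getElem _ _ hk

section nth

variable {E : Finset ℕ} {k : ℕ}

theorem nth_mem (hk : 1 ≤ k) (hkE : k ≤ #E) : nth E k ∈ E := by
  rw [← mem_sort (· ≤ ·), nth_eq_getElem E (by simp; omega)]
  exact List.getElem_mem _

theorem card_filter_lt_nth (hk : 1 ≤ k) (hkE : k ≤ #E) : #{x ∈ E | x < nth E k} = k - 1 := by
  rw [← countP_sort_lt, nth_eq_getElem E (by simp; omega)]
  exact (E.sortedLT_sort).pairwise.countP_lt_getElem _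

theorem nth_card_filter_lt_add_one {e : ℕ} (he : e ∈ E) : nth E (#{x ∈ E | x < e} + 1) = e := by
  obtain ⟨i, hi, rfl⟩ := List.mem_iff_getElem.mp ((mem_sort (· ≤ ·)).mpr he)
  rw [← countP_sort_lt, (E.sortedLT_sort).pairwise.countP_lt_getElem hi]
  exact nth_eq_getElem E hi

theorem nth_lt_nth {k₁ k₂ : ℕ} (hk₁ : 1 ≤ k₁) (hlt : k₁ < k₂) (hk₂ : k₂ ≤ #E) :
    nth E k₁ < nth E k₂ := by
  rw [nth_eq_getElem E (by simp; omega), nth_eq_getElem E (by simp; omega)]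
  exact (E.sortedLT_sort).pairwise.rel_get_of_lt (a := ⟨k₁ - 1, by simp; omega⟩)
    (b := ⟨k₂ - 1, by simp; omega⟩) (by simp; omega)

theorem nth_le_nth {k₁ k₂ : ℕ} (hk₁ : 1 ≤ k₁) (hle : k₁ ≤ k₂) (hk₂ : k₂ ≤ #E) :
    nth E k₁ ≤ nth E k₂ := by
  rcases hle.eq_or_lt with rfl | hlt
  · exact le_rfl
  · exact (nth_lt_nth hk₁ hlt hk₂).le

theorem nth_insert_add_one_of_lt {x : ℕ} (hx : x ∉ E) (hk : 1 ≤ k) (hkE : k ≤ #E)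
    (hlt : x < nth E k) : nth (insert x E) (k + 1) = nth E k := by
  have hcard : #{y ∈ insert x E | y < nth E k} = k := by
    rw [filter_insert, if_pos hlt, card_insert_of_notMem (by simp [hx]),
      card_filter_lt_nth hk hkE]
    omega
  have hmem : nth E k ∈ insert x E := mem_insert_of_mem (nth_mem hk hkE)
  simpa [hcard] using nth_card_filter_lt_add_one hmem

end nth

theorem nth_notMem_of_forall_le_of_lt {E F : Finset ℕ} {q : ℕ} (hq : 1 ≤ q) (hqF : q ≤ #F)
    (hlt : nth F q < nth E q) (hle : ∀ r, 1 ≤ r → r < q → nth E r ≤ nth F r) :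
    nth F q ∉ E := by
  intro hmem
  set c := #{x ∈ E | x < nth F q}
  have hc : nth E (c + 1) = nth F q := nth_card_filter_lt_add_one hmem
  have hcE : c + 1 ≤ #E := card_lt_card (filter_ssubset.mpr ⟨_, hmem, lt_irrefl _⟩)
  have hcq : c + 1 < q := by
    by_contra! hqc
    have := nth_le_nth hq hqc hcE
    omega
  have := hle (c + 1) (by omega) hcq
  have := nth_lt_nth (E := F) (by omega) hcq hqF
  omega

theorem stmt7_general (t : ℕ) (A B : Finset ℕ)
    (hAc : A.card = t) (hBc : B.card = t)
    (γ : ℕ) (hγA : γ ∉ A)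
    (q : ℕ) (hq1 : 1 ≤ q)
    (hqP : q ≤ t → nth B q > nth (insert γ A) q)
    (hqmin : ∀ r, 1 ≤ r → r < q → nth B r ≤ nth (insert γ A) r)
    (α j : ℕ) (hj1 : 1 ≤ j) (hj2 : j ≤ t)
    (hαA : nth A j = α) (hαB : nth B j = α) (hγα : γ < α) :
    nth (insert γ A) q < α ∧
    nth (insert γ A) (j + 1) = α ∧
    nth (insert (nth (insert γ A) q) B) (j + 1) = α := by
  subst hαA
  have hA'c : #(insert γ A) = t + 1 := by rw [card_insert_of_notMem hγA, hAc]
  have hA' : nth (insert γ A) (j + 1) = nth A j :=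
    nth_insert_add_one_of_lt hγA hj1 (by omega) hγα
  have hA'j : nth (insert γ A) j < nth A j := hA' ▸ nth_lt_nth hj1 (by omega) (by omega)
  have hqj : q ≤ j := by
    by_contra! hjq
    have := hqmin j hj1 hjq
    omega
  have hα' : nth (insert γ A) q < nth A j := (nth_le_nth hq1 hqj (by omega)).trans_lt hA'j
  have hα'B : nth (insert γ A) q ∉ B :=
    nth_notMem_of_forall_le_of_lt hq1 (by omega) (hqP (by omega)) hqmin
  exact ⟨hα', hA', hαB ▸ nth_insert_add_one_of_lt hα'B hj1 (by omega) (hαB ▸ hα')⟩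

theorem stmt7 (n t : ℕ) (A B : Finset ℕ) (hAs : A ⊆ Finset.Icc 1 n) (hBs : B ⊆ Finset.Icc 1 n)
    (hAc : A.card = t) (hBc : B.card = t) (hdom : Dom B A)
    (γ : ℕ) (hγ : γ ∈ Finset.Icc 1 n) (hγA : γ ∉ A)
    (q : ℕ) (hq1 : 1 ≤ q) (hq2 : q ≤ t + 1)
    (hqP : q ≤ t → nth B q > nth (insert γ A) q)
    (hqmin : ∀ r, 1 ≤ r → r < q → nth B r ≤ nth (insert γ A) r)
    (α j : ℕ) (hj1 : 1 ≤ j) (hj2 : j ≤ t)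
    (hαA : nth A j = α) (hαB : nth B j = α) (hγα : γ < α) :
    nth (insert γ A) q < α ∧
    nth (insert γ A) (j + 1) = α ∧
    nth (insert (nth (insert γ A) q) B) (j + 1) = α :=
  stmt7_general t A B hAc hBc γ hγA q hq1 hqP hqmin α j hj1 hj2 hαA hαB hγα
end
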